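/- arXiv:2110.06300 — 5 statements merged into one kernel-verified Lean document; each statement's English description precedes it below -/
import Mathlib

section
/- In the category of Banach spaces with contractive linear maps, every Banach space X is the colimit (inductive limit) of the diagram of its finite-dimensional subspaces with inclusion maps. -/
open CategoryTheory Limits

/-- The category of (real) Banach spaces and linear operators of norm at most one. -/
structure Ban1 : Type 1 where
  carrier : Type
  [nacg : NormedAddCommGroup carrier]
  [nsp : NormedSpace ℝ carrier]
  [cpl : CompleteSpace carrier]

attribute [instance] Ban1.nacg Ban1.nsp Ban1.cpl

instance : CoeSort Ban1 Type := ⟨Ban1.carrier⟩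

instance : Category Ban1 where
  Hom X Y := {f : X.carrier →L[ℝ] Y.carrier // ‖f‖ ≤ 1}
  id X := ⟨ContinuousLinearMap.id ℝ X.carrier, ContinuousLinearMap.norm_id_le⟩
  comp f g := ⟨g.1.comp f.1,
    le_trans (ContinuousLinearMap.opNorm_comp_le _ _)
      (mul_le_one₀ g.2 (norm_nonneg _) f.2)⟩
  id_comp f := Subtype.ext (by ext x; rfl)
  comp_id f := Subtype.ext (by ext x; rfl)
  assoc f g h := Subtype.ext (by ext x; rfl)

/-- The directed poset of finite-dimensional subspaces of a Banach space. -/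
def FinSub (X : Ban1) : Type := {s : Submodule ℝ X.carrier // FiniteDimensional ℝ s}

instance (X : Ban1) : PartialOrder (FinSub X) := Subtype.partialOrder _
instance (X : Ban1) : Category (FinSub X) := Preorder.smallCategory _

/-- A finite-dimensional subspace, as a Banach space. -/
noncomputable def FinSub.toBan {X : Ban1} (s : FinSub X) : Ban1 :=
  letI := s.2
  { carrier := s.1 }

/-- The diagram of finite-dimensional subspaces of `X` with inclusion maps. -/
noncomputable def finSubDiagram (X : Ban1) : FinSub X ⥤ Ban1 where
  obj s := s.toBan
  map {s t} h :=
    ⟨LinearMap.mkContinuous (Submodule.inclusion (leOfHom h)) 1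
      (fun x => by rw [one_mul]; rfl), LinearMap.mkContinuous_norm_le _ zero_le_one _⟩
  map_id s := Subtype.ext (by ext x; rfl)
  map_comp f g := Subtype.ext (by ext x; rfl)

/-- The cocone over the diagram of finite-dimensional subspaces given by the inclusions into `X`. -/
noncomputable def finSubCocone (X : Ban1) : Cocone (finSubDiagram X) where
  pt := X
  ι :=
    { app := fun s =>
        ⟨LinearMap.mkContinuous s.1.subtype 1 (fun x => by rw [one_mul]; rfl),
          LinearMap.mkContinuous_norm_le _ zero_le_one _⟩
      naturality := fun s t h => Subtype.ext (by ext x; rfl) }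

/-!
Every vector `x` lies in the finite-dimensional subspace `ℝ ∙ x`, and any two finite-dimensional
subspaces lie in a common one, their sum. Hence the legs of any cocone over the diagram agree on
common vectors and glue to a single linear map on `X`; it is contractive because every leg is, and
it is the only map through which the cocone factors because the subspaces `ℝ ∙ x` cover `X`.
-/

namespace Ban1

variable {A B : Ban1}

lemma norm_hom_apply_le (f : A ⟶ B) (x : A) : ‖f.1 x‖ ≤ ‖x‖ := by
  simpa using f.1.le_of_opNorm_le f.2 x

end Ban1

namespace FinSub

variable {X : Ban1}

noncomputable def span (x : X) : FinSub X := ⟨ℝ ∙ x, inferInstance⟩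

lemma mem_span_self (x : X) : x ∈ (span x).1 := Submodule.mem_span_singleton_self x

noncomputable def sup (s t : FinSub X) : FinSub X :=
  letI := s.2
  letI := t.2
  ⟨s.1 ⊔ t.1, inferInstance⟩

lemma le_sup_left (s t : FinSub X) : s ≤ s.sup t := (_root_.le_sup_left : s.1 ≤ s.1 ⊔ t.1)

lemma le_sup_right (s t : FinSub X) : t ≤ s.sup t := (_root_.le_sup_right : t.1 ≤ s.1 ⊔ t.1)

end FinSub

namespace finSubDiagram

variable {X : Ban1} (c : Cocone (finSubDiagram X))

lemma ι_app_apply_of_le {s t : FinSub X} (h : s ≤ t) (x : s.1) :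
    (c.ι.app t).1 ⟨x, h x.2⟩ = (c.ι.app s).1 x :=
  congr_arg (fun f => f.1 x) (c.w (homOfLE h))

lemma ι_app_apply_eq {s t : FinSub X} {x : X} (hs : x ∈ s.1) (ht : x ∈ t.1) :
    (c.ι.app s).1 ⟨x, hs⟩ = (c.ι.app t).1 ⟨x, ht⟩ :=
  (ι_app_apply_of_le c (s.le_sup_left t) ⟨x, hs⟩).symm.trans
    (ι_app_apply_of_le c (s.le_sup_right t) ⟨x, ht⟩)

noncomputable def glue : X →ₗ[ℝ] c.pt where
  toFun x := (c.ι.app (FinSub.span x)).1 ⟨x, FinSub.mem_span_self x⟩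
  map_add' x y := by
    let t := (FinSub.span x).sup (FinSub.span y)
    have hx : x ∈ t.1 := FinSub.le_sup_left _ _ (FinSub.mem_span_self x)
    have hy : y ∈ t.1 := FinSub.le_sup_right _ _ (FinSub.mem_span_self y)
    rw [ι_app_apply_eq c _ hx, ι_app_apply_eq c _ hy, ι_app_apply_eq c _ (t.1.add_mem hx hy)]
    exact map_add (c.ι.app t).1 ⟨x, hx⟩ ⟨y, hy⟩
  map_smul' r x := by
    rw [ι_app_apply_eq c _ ((FinSub.span x).1.smul_mem r (FinSub.mem_span_self x))]
    exact map_smul (c.ι.app (FinSub.span x)).1 r ⟨x, FinSub.mem_span_self x⟩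

lemma glue_apply_of_mem {s : FinSub X} {x : X} (hx : x ∈ s.1) :
    glue c x = (c.ι.app s).1 ⟨x, hx⟩ :=
  ι_app_apply_eq c _ hx

lemma norm_glue_apply_le (x : X) : ‖glue c x‖ ≤ ‖x‖ :=
  Ban1.norm_hom_apply_le (c.ι.app (FinSub.span x)) _

noncomputable def desc : X ⟶ c.pt :=
  ⟨(glue c).mkContinuous 1 (fun x => (one_mul ‖x‖).symm ▸ norm_glue_apply_le c x),
    LinearMap.mkContinuous_norm_le _ zero_le_one _⟩

end finSubDiagram

noncomputable def isColimitFinSubCocone (X : Ban1) : IsColimit (finSubCocone X) where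
  desc := finSubDiagram.desc
  fac c _ := Subtype.ext <| ContinuousLinearMap.ext fun x =>
    finSubDiagram.glue_apply_of_mem c x.2
  uniq _ _ hm := Subtype.ext <| ContinuousLinearMap.ext fun x =>
    congr_arg (fun f => f.1 ⟨x, FinSub.mem_span_self x⟩) (hm (FinSub.span x))

/-- Every Banach space is the inductive limit of its finite-dimensional subspaces in `Ban₁`. -/
theorem stmt0 (X : Ban1) : Nonempty (IsColimit (finSubCocone X)) :=
  ⟨isColimitFinSubCocone X⟩
end

section
/- In the category of Banach spaces and contractive operators, every Banach space X is the colimit of the forgetful functor from the comma category (ℓ₁-finite ↓ X), whose objects are pairs (ℓ₁ⁿ, φ) with φ: ℓ₁ⁿ → X a contractive operator; i.e., X = lim→ ℓ₁ⁿ over this comma category. -/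
open CategoryTheory Limits

/-- `ℓ₁ⁿ`: the space `ℝⁿ` with the `ℓ₁` norm. -/
abbrev L1n (n : ℕ) : Type := PiLp 1 (fun _ : Fin n => ℝ)

/-- The comma category `(ℓ₁• ↓ X)`: objects are pairs `(ℓ₁ⁿ, φ)` where `φ : ℓ₁ⁿ → X` is a
contractive operator. -/
structure L1Over (X : Ban1) : Type where
  n : ℕ
  φ : L1n n →L[ℝ] X.carrier
  hφ : ‖φ‖ ≤ 1

instance (X : Ban1) : Category (L1Over X) where
  Hom a b := {α : L1n a.n →L[ℝ] L1n b.n // ‖α‖ ≤ 1 ∧ b.φ.comp α = a.φ}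
  id a := ⟨ContinuousLinearMap.id ℝ _, ContinuousLinearMap.norm_id_le, by ext x; rfl⟩
  comp {a b c} f g := ⟨g.1.comp f.1,
    le_trans (ContinuousLinearMap.opNorm_comp_le _ _)
      (mul_le_one₀ g.2.1 (norm_nonneg _) f.2.1),
    by rw [← ContinuousLinearMap.comp_assoc, g.2.2, f.2.2]⟩
  id_comp f := Subtype.ext (by ext x; rfl)
  comp_id f := Subtype.ext (by ext x; rfl)
  assoc f g h := Subtype.ext (by ext x; rfl)

/-- The forgetful functor `(ℓ₁• ↓ X) ⥤ Ban₁` sending `(ℓ₁ⁿ, φ)` to `ℓ₁ⁿ`. -/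
noncomputable def l1OverForget (X : Ban1) : L1Over X ⥤ Ban1 where
  obj a := { carrier := L1n a.n }
  map f := ⟨f.1, f.2.1⟩
  map_id a := Subtype.ext (ContinuousLinearMap.ext fun _ => rfl)
  map_comp f g := Subtype.ext (ContinuousLinearMap.ext fun _ => rfl)

/-- The cocone over the forgetful functor of the comma category whose point is `X` itself,
with structure maps the `φ`'s. -/
noncomputable def l1OverCocone (X : Ban1) : Cocone (l1OverForget X) where
  pt := X
  ι :=
    { app := fun a => ⟨a.φ, a.hφ⟩
      naturality := fun a b f => Subtype.ext
        (by ext x; exact DFunLike.congr_fun f.2.2 x) }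

/-!
A cocone `s` under the forgetful functor is determined by its legs at the one-dimensional objects
`line y : t ↦ t • y` (`‖y‖ ≤ 1`), evaluated at the unit vector. Indeed, a vector `u` of norm at
most one in some `ℓ₁ⁿ` spans a morphism `line (φ u) ⟶ (ℓ₁ⁿ, φ)`, and multiplication by `c` with
`|c| ≤ 1` is a morphism `line (c • y) ⟶ line y`, so this value is homogeneous in `y`. Hence
`x ↦ ‖x‖ • s(line (x / ‖x‖))` is a contraction `X → s.pt` through which every leg factors, and it
is additive because any two vectors of `X` lie in the image of a common `ℓ₁²`.
-/

section NormalizedVectors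

variable {E : Type*} [NormedAddCommGroup E] [NormedSpace ℝ E]

lemma norm_inv_norm_smul_le_one (x : E) : ‖‖x‖⁻¹ • x‖ ≤ 1 := by
  rcases eq_or_ne x 0 with rfl | hx
  · simp
  · exact (norm_smul_inv_norm hx).le

lemma norm_smul_inv_norm_smul (x : E) : ‖x‖ • ‖x‖⁻¹ • x = x := by
  rcases eq_or_ne x 0 with rfl | hx
  · simp
  · rw [smul_inv_smul₀ (norm_ne_zero_iff.mpr hx)]

end NormalizedVectors

namespace PiLp

variable {ι : Type*} [Fintype ι] {E F : Type*} [SeminormedAddCommGroup E] [NormedSpace ℝ E]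
  [SeminormedAddCommGroup F] [NormedSpace ℝ F]

noncomputable def l1Lift (v : ι → E) : PiLp 1 (fun _ : ι => ℝ) →L[ℝ] E :=
  ∑ i, (PiLp.proj 1 (fun _ : ι => ℝ) i).smulRight (v i)

lemma l1Lift_apply (v : ι → E) (u : PiLp 1 (fun _ : ι => ℝ)) : l1Lift v u = ∑ i, u i • v i := by
  simp [l1Lift]

lemma l1Lift_single [DecidableEq ι] (v : ι → E) (i : ι) (c : ℝ) :
    l1Lift v (single 1 i c) = c • v i := by
  simp [l1Lift_apply, single_apply]

lemma norm_l1Lift_le {v : ι → E} (hv : ∀ i, ‖v i‖ ≤ 1) : ‖l1Lift v‖ ≤ 1 := by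
  refine ContinuousLinearMap.opNorm_le_bound _ zero_le_one fun u => ?_
  calc ‖l1Lift v u‖ ≤ ∑ i, ‖u i‖ * ‖v i‖ := by
        rw [l1Lift_apply]
        exact (norm_sum_le _ _).trans_eq (by simp only [norm_smul])
    _ ≤ ∑ i, ‖u i‖ := by gcongr with i; exact mul_le_of_le_one_right (norm_nonneg _) (hv i)
    _ = 1 * ‖u‖ := by rw [norm_eq_of_L1, one_mul]

lemma comp_l1Lift (f : E →L[ℝ] F) (v : ι → E) : f.comp (l1Lift v) = l1Lift (f ∘ v) := by
  ext u
  simp [l1Lift_apply]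

end PiLp

open PiLp

namespace L1Over

variable {X : Ban1}

lemma norm_φ_apply_le (a : L1Over X) (u : L1n a.n) : ‖a.φ u‖ ≤ ‖u‖ := by
  simpa using a.φ.le_of_opNorm_le a.hφ u

-- Reducible, so that `L1n (line y hy).n` is seen to be `L1n 1`.
noncomputable abbrev line (y : X) (hy : ‖y‖ ≤ 1) : L1Over X :=
  ⟨1, l1Lift fun _ => y, norm_l1Lift_le fun _ => hy⟩

lemma exists_φ_apply_eq {n : ℕ} (x : Fin n → X) :
    ∃ (a : L1Over X) (u : Fin n → L1n a.n), ∀ i, a.φ (u i) = x i :=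
  ⟨⟨n, l1Lift fun i => ‖x i‖⁻¹ • x i, norm_l1Lift_le fun i => norm_inv_norm_smul_le_one _⟩,
    fun i => single 1 i ‖x i‖, fun i => by
      simp only [l1Lift_single, norm_smul_inv_norm_smul]⟩

end L1Over

namespace l1OverForget

variable {X : Ban1} (s : Cocone (l1OverForget X))

noncomputable def leg (a : L1Over X) : L1n a.n →L[ℝ] s.pt := (s.ι.app a).1

lemma norm_leg_le (a : L1Over X) : ‖leg s a‖ ≤ 1 := (s.ι.app a).2

lemma leg_apply_hom {a b : L1Over X} (f : a ⟶ b) (u : L1n a.n) : leg s b (f.1 u) = leg s a u :=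
  DFunLike.congr_fun (congrArg Subtype.val (s.w f)) u

noncomputable def lineValue (y : X) (hy : ‖y‖ ≤ 1) : s.pt :=
  leg s (L1Over.line y hy) (single 1 (0 : Fin 1) 1)

lemma norm_lineValue_le (y : X) (hy : ‖y‖ ≤ 1) : ‖lineValue s y hy‖ ≤ 1 := by
  simpa [lineValue] using
    (leg s (L1Over.line y hy)).le_of_opNorm_le (norm_leg_le s _) (single 1 (0 : Fin 1) 1)

lemma leg_eq_lineValue (a : L1Over X) (u : L1n a.n) (hu : ‖u‖ ≤ 1) :
    leg s a u = lineValue s (a.φ u) ((a.norm_φ_apply_le u).trans hu) := by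
  let f : L1Over.line (a.φ u) ((a.norm_φ_apply_le u).trans hu) ⟶ a :=
    ⟨l1Lift fun _ => u, norm_l1Lift_le fun _ => hu, comp_l1Lift _ _⟩
  simp [← leg_apply_hom s f, f, l1Lift_single, lineValue]

lemma lineValue_smul {y y' : X} (hy : ‖y‖ ≤ 1) (hy' : ‖y'‖ ≤ 1) {c : ℝ} (hc : |c| ≤ 1)
    (h : y' = c • y) : lineValue s y' hy' = c • lineValue s y hy := by
  let f : L1Over.line y' hy' ⟶ L1Over.line y hy :=
    ⟨l1Lift fun _ => single 1 (0 : Fin 1) c, norm_l1Lift_le fun _ => by simpa using hc, by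
      rw [comp_l1Lift]
      change l1Lift _ = l1Lift fun _ => y'
      congr 1
      funext
      simp [l1Lift_single, h]⟩
  have hc1 : (single 1 (0 : Fin 1) c : L1n 1) = c • single 1 0 1 := by ext; simp [single_apply]
  rw [lineValue, ← leg_apply_hom s f]
  simp [f, l1Lift_single, hc1, lineValue]

noncomputable def descFun (x : X) : s.pt :=
  ‖x‖ • lineValue s (‖x‖⁻¹ • x) (norm_inv_norm_smul_le_one x)

lemma descFun_φ_apply (a : L1Over X) (u : L1n a.n) : descFun s (a.φ u) = leg s a u := by
  set x := a.φ u
  have hxu : ‖x‖ ≤ ‖u‖ := a.norm_φ_apply_le u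
  have hc : |‖u‖⁻¹ * ‖x‖| ≤ 1 := by
    rw [abs_of_nonneg (by positivity)]
    exact inv_mul_le_one_of_le₀ hxu (norm_nonneg _)
  have hφ : a.φ (‖u‖⁻¹ • u) = (‖u‖⁻¹ * ‖x‖) • ‖x‖⁻¹ • x := by
    rw [map_smul, mul_smul, norm_smul_inv_norm_smul]
  have hcancel : ‖u‖ * (‖u‖⁻¹ * ‖x‖) = ‖x‖ := by
    rcases eq_or_ne ‖u‖ 0 with hu | hu
    · rw [hu, zero_mul]; exact (le_antisymm (hu ▸ hxu) (norm_nonneg _)).symm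
    · exact mul_inv_cancel_left₀ hu _
  have hleg : leg s a u = ‖u‖ • leg s a (‖u‖⁻¹ • u) := by
    rw [← map_smul, norm_smul_inv_norm_smul]
  rw [hleg, leg_eq_lineValue s a _ (norm_inv_norm_smul_le_one u),
    lineValue_smul s (norm_inv_norm_smul_le_one x) _ hc hφ, smul_smul, hcancel, descFun]

lemma descFun_add (x y : X) : descFun s (x + y) = descFun s x + descFun s y := by
  obtain ⟨a, u, hu⟩ := L1Over.exists_φ_apply_eq ![x, y]
  rw [← show a.φ (u 0) = x from hu 0, ← show a.φ (u 1) = y from hu 1, ← map_add,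
    descFun_φ_apply, descFun_φ_apply, descFun_φ_apply, map_add]

lemma descFun_smul (c : ℝ) (x : X) : descFun s (c • x) = c • descFun s x := by
  obtain ⟨a, u, hu⟩ := L1Over.exists_φ_apply_eq fun _ : Fin 1 => x
  rw [← hu 0, ← map_smul, descFun_φ_apply, descFun_φ_apply, map_smul]

lemma norm_descFun_le (x : X) : ‖descFun s x‖ ≤ ‖x‖ := by
  rw [descFun, norm_smul, norm_norm]
  exact mul_le_of_le_one_right (norm_nonneg _) (norm_lineValue_le s _ _)

noncomputable def desc : X →L[ℝ] s.pt :=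
  LinearMap.mkContinuous ⟨⟨descFun s, descFun_add s⟩, descFun_smul s⟩ 1 fun x => by
    simpa using norm_descFun_le s x

lemma norm_desc_le : ‖desc s‖ ≤ 1 :=
  LinearMap.mkContinuous_norm_le _ zero_le_one _

lemma eq_desc (m : X →L[ℝ] s.pt) (hm : ∀ a : L1Over X, m.comp a.φ = leg s a) : m = desc s := by
  ext x
  obtain ⟨a, u, hu⟩ := L1Over.exists_φ_apply_eq fun _ : Fin 1 => x
  rw [← hu 0, ← ContinuousLinearMap.comp_apply, hm]
  exact (descFun_φ_apply s a (u 0)).symm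

end l1OverForget

/-- Every Banach space `X` is the inductive limit `X = lim→ ℓ₁ⁿ` over the comma category
`(ℓ₁• ↓ X)` in `Ban₁`. -/
theorem stmt1 (X : Ban1) : Nonempty (IsColimit (l1OverCocone X)) :=
  ⟨{ desc := fun s => ⟨l1OverForget.desc s, l1OverForget.norm_desc_le s⟩
     fac := fun s a => Subtype.ext <| ContinuousLinearMap.ext <| l1OverForget.descFun_φ_apply s a
     uniq := fun s m hm => Subtype.ext <|
       l1OverForget.eq_desc s m.1 fun a => congrArg Subtype.val (hm a) }⟩
end

section
/- If a family of contractive operators ψ_{(n,φ)}: ℓ₁ⁿ → Y is compatible with all morphisms of the comma category (ℓ₁• ↓ X) (i.e. ψ_{(m,φ')}∘α = ψ_{(n,φ)} whenever φ'∘α = φ), then the map T: X → Y defined by T(x) = ψ_{(n,φ)}(u) whenever φ(u) = x is well-defined, linear, and contractive. -/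
/-!
If `‖x‖ ≤ c`, then `x` is the image of `c e₀` under the contractive map `ℓ₁¹ → X`,
`t ↦ t • c⁻¹ x`. A representation `x = φ u` with `‖u‖ ≤ c` receives the morphism
`t ↦ t • c⁻¹ u` from this line object, so compatibility forces `ψ (n, φ) u = ψ (1, line) (c e₀)`;
choosing `c` above the norms of two representations shows they give the same value.
Linearity holds because any two vectors lie in the image of a single contractive `ℓ₁² → X`,
and the representation with `c = ‖x‖` gives `‖T x‖ ≤ ‖x‖`.
-/

section InvSmul

variable {E : Type*} [NormedAddCommGroup E] [NormedSpace ℝ E] {x : E} {c : ℝ}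

lemma norm_inv_smul_le_one (h : ‖x‖ ≤ c) : ‖c⁻¹ • x‖ ≤ 1 := by
  rw [norm_smul, norm_inv, Real.norm_eq_abs, abs_of_nonneg ((norm_nonneg x).trans h)]
  exact inv_mul_le_one_of_le₀ h ((norm_nonneg x).trans h)

lemma smul_inv_smul_of_norm_le (h : ‖x‖ ≤ c) : c • c⁻¹ • x = x := by
  rcases ((norm_nonneg x).trans h).eq_or_lt with rfl | hc
  · simp [norm_le_zero_iff.1 h]
  · exact smul_inv_smul₀ hc.ne' x

end InvSmul

namespace L1n

variable {E F : Type*} [NormedAddCommGroup E] [NormedSpace ℝ E]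
  [NormedAddCommGroup F] [NormedSpace ℝ F] {n : ℕ}

noncomputable def single (i : Fin n) (a : ℝ) : L1n n := PiLp.single 1 i a

lemma norm_single (i : Fin n) (a : ℝ) : ‖single i a‖ = |a| := by
  simp [single]

noncomputable def lift (v : Fin n → E) : L1n n →L[ℝ] E :=
  LinearMap.toContinuousLinearMap
    (Fintype.linearCombination ℝ v ∘ₗ (WithLp.linearEquiv 1 ℝ (Fin n → ℝ)).toLinearMap)

lemma lift_apply (v : Fin n → E) (t : L1n n) : lift v t = ∑ i, t i • v i := rfl

lemma lift_single (v : Fin n → E) (i : Fin n) (a : ℝ) : lift v (single i a) = a • v i := by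
  simp [lift_apply, single, PiLp.single_apply]

lemma norm_lift_le_one {v : Fin n → E} (hv : ∀ i, ‖v i‖ ≤ 1) : ‖lift v‖ ≤ 1 :=
  ContinuousLinearMap.opNorm_le_bound _ zero_le_one fun t =>
    calc ‖lift v t‖ ≤ ∑ i, ‖t i • v i‖ := by rw [lift_apply]; exact norm_sum_le _ _
    _ ≤ ∑ i, ‖t i‖ := Finset.sum_le_sum fun i _ => by
        rw [norm_smul]; exact mul_le_of_le_one_right (norm_nonneg _) (hv i)
    _ = 1 * ‖t‖ := by rw [one_mul, PiLp.norm_eq_of_L1]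

lemma comp_lift (f : E →L[ℝ] F) (v : Fin n → E) : f.comp (lift v) = lift (f ∘ v) := by
  ext t
  simp [lift_apply]

noncomputable def line (x : E) (c : ℝ) : L1n 1 →L[ℝ] E := lift fun _ => c⁻¹ • x

variable {x : E} {c : ℝ}

lemma norm_line_le_one (h : ‖x‖ ≤ c) : ‖line x c‖ ≤ 1 :=
  norm_lift_le_one fun _ => norm_inv_smul_le_one h

lemma line_single (h : ‖x‖ ≤ c) : line x c (single 0 c) = x := by
  rw [line, lift_single, smul_inv_smul_of_norm_le h]

lemma comp_line (f : E →L[ℝ] F) : f.comp (line x c) = line (f x) c := by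
  simp [line, comp_lift, Function.comp_def]

lemma exists_norm_le_one_apply_eq_pair (x y : E) :
    ∃ φ : L1n 2 →L[ℝ] E, ‖φ‖ ≤ 1 ∧ ∃ u v, φ u = x ∧ φ v = y :=
  ⟨lift ![‖x‖⁻¹ • x, ‖y‖⁻¹ • y],
    norm_lift_le_one <|
      Fin.forall_fin_two.2 ⟨norm_inv_smul_le_one le_rfl, norm_inv_smul_le_one le_rfl⟩,
    single 0 ‖x‖, single 1 ‖y‖,
    by simp [lift_single, smul_inv_smul_of_norm_le le_rfl],
    by simp [lift_single, smul_inv_smul_of_norm_le le_rfl]⟩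

end L1n

section CommaCompatible

variable {X Y : Type*} [NormedAddCommGroup X] [NormedSpace ℝ X]
  [NormedAddCommGroup Y] [NormedSpace ℝ Y]

/-- `ψ` is a cone over the comma category `(ℓ₁• ↓ X)`: it commutes with every morphism `α`. -/
def CommaCompatible (ψ : ∀ (n : ℕ) (φ : L1n n →L[ℝ] X), ‖φ‖ ≤ 1 → (L1n n →L[ℝ] Y)) : Prop :=
  ∀ (n m : ℕ) (φ : L1n n →L[ℝ] X) (φ' : L1n m →L[ℝ] X)
    (hφ : ‖φ‖ ≤ 1) (hφ' : ‖φ'‖ ≤ 1) (α : L1n n →L[ℝ] L1n m), ‖α‖ ≤ 1 →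
      φ'.comp α = φ → (ψ m φ' hφ').comp α = ψ n φ hφ

variable {ψ : ∀ (n : ℕ) (φ : L1n n →L[ℝ] X), ‖φ‖ ≤ 1 → (L1n n →L[ℝ] Y)}
  {n m : ℕ} {φ : L1n n →L[ℝ] X} {φ' : L1n m →L[ℝ] X} {u : L1n n} {u' : L1n m} {c : ℝ}

noncomputable def inducedMap (ψ : ∀ (n : ℕ) (φ : L1n n →L[ℝ] X), ‖φ‖ ≤ 1 → (L1n n →L[ℝ] Y))
    (x : X) : Y :=
  ψ 1 (L1n.line x ‖x‖) (L1n.norm_line_le_one le_rfl) (L1n.single 0 ‖x‖)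

lemma norm_inducedMap_le (hψnorm : ∀ n φ hφ, ‖ψ n φ hφ‖ ≤ 1) (x : X) :
    ‖inducedMap ψ x‖ ≤ ‖x‖ :=
  calc ‖inducedMap ψ x‖ ≤ 1 * ‖L1n.single (0 : Fin 1) ‖x‖‖ :=
      ContinuousLinearMap.le_of_opNorm_le _ (hψnorm _ _ _) _
  _ = ‖x‖ := by rw [one_mul, L1n.norm_single, abs_norm]

namespace CommaCompatible

variable (hψ : CommaCompatible ψ)
include hψ

lemma apply_eq_line (hφ : ‖φ‖ ≤ 1) (hu : ‖u‖ ≤ c) :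
    ψ n φ hφ u = ψ 1 (L1n.line (φ u) c)
      (L1n.norm_line_le_one ((φ.le_of_opNorm_le hφ u).trans (by simpa using hu)))
      (L1n.single 0 c) := by
  rw [← hψ 1 n _ φ _ hφ (L1n.line u c) (L1n.norm_line_le_one hu) (L1n.comp_line φ),
    ContinuousLinearMap.comp_apply, L1n.line_single hu]

lemma apply_eq_apply (hφ : ‖φ‖ ≤ 1) (hφ' : ‖φ'‖ ≤ 1) (h : φ u = φ' u') :
    ψ n φ hφ u = ψ m φ' hφ' u' := by
  rw [hψ.apply_eq_line hφ (le_max_left ‖u‖ ‖u'‖), hψ.apply_eq_line hφ' (le_max_right ‖u‖ ‖u'‖)]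
  simp_rw [h]

lemma inducedMap_apply (hφ : ‖φ‖ ≤ 1) (u : L1n n) : inducedMap ψ (φ u) = ψ n φ hφ u :=
  hψ.apply_eq_apply _ hφ (L1n.line_single le_rfl)

lemma inducedMap_add (x y : X) : inducedMap ψ (x + y) = inducedMap ψ x + inducedMap ψ y := by
  obtain ⟨φ, hφ, u, v, rfl, rfl⟩ := L1n.exists_norm_le_one_apply_eq_pair x y
  rw [← map_add, hψ.inducedMap_apply hφ, hψ.inducedMap_apply hφ, hψ.inducedMap_apply hφ, map_add]

lemma inducedMap_smul (a : ℝ) (x : X) : inducedMap ψ (a • x) = a • inducedMap ψ x := by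
  have hφ := L1n.norm_line_le_one (le_refl ‖x‖)
  rw [← L1n.line_single (le_refl ‖x‖), ← map_smul, hψ.inducedMap_apply hφ,
    hψ.inducedMap_apply hφ, map_smul]

noncomputable def toCLM (hψnorm : ∀ n φ hφ, ‖ψ n φ hφ‖ ≤ 1) : X →L[ℝ] Y :=
  LinearMap.mkContinuous ⟨⟨inducedMap ψ, hψ.inducedMap_add⟩, hψ.inducedMap_smul⟩ 1
    fun x => by simpa using norm_inducedMap_le hψnorm x

end CommaCompatible

end CommaCompatible

theorem stmt2_general {X Y : Type} [NormedAddCommGroup X] [NormedSpace ℝ X]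
    [NormedAddCommGroup Y] [NormedSpace ℝ Y]
    (ψ : ∀ (n : ℕ) (φ : L1n n →L[ℝ] X), ‖φ‖ ≤ 1 → (L1n n →L[ℝ] Y))
    (hψnorm : ∀ n φ hφ, ‖ψ n φ hφ‖ ≤ 1)
    (hcompat : ∀ (n m : ℕ) (φ : L1n n →L[ℝ] X) (φ' : L1n m →L[ℝ] X)
      (hφ : ‖φ‖ ≤ 1) (hφ' : ‖φ'‖ ≤ 1) (α : L1n n →L[ℝ] L1n m), ‖α‖ ≤ 1 →
        φ'.comp α = φ → (ψ m φ' hφ').comp α = ψ n φ hφ) :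
    (∀ (n m : ℕ) (φ : L1n n →L[ℝ] X) (φ' : L1n m →L[ℝ] X)
      (hφ : ‖φ‖ ≤ 1) (hφ' : ‖φ'‖ ≤ 1) (u : L1n n) (u' : L1n m),
        φ u = φ' u' → ψ n φ hφ u = ψ m φ' hφ' u') ∧
    ∃ T : X →L[ℝ] Y, ‖T‖ ≤ 1 ∧
      ∀ (n : ℕ) (φ : L1n n →L[ℝ] X) (hφ : ‖φ‖ ≤ 1) (u : L1n n),
        T (φ u) = ψ n φ hφ u := by
  have hψ : CommaCompatible ψ := hcompat
  exact ⟨fun _ _ _ _ hφ hφ' _ _ h => hψ.apply_eq_apply hφ hφ' h,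
    hψ.toCLM hψnorm, LinearMap.mkContinuous_norm_le _ zero_le_one _,
    fun _ _ hφ u => hψ.inducedMap_apply hφ u⟩

/-- Given a family of contractive operators `ψ (n, φ) : ℓ₁ⁿ → Y`, indexed by the objects
`(ℓ₁ⁿ, φ : ℓ₁ⁿ → X)` of the comma category `(ℓ₁• ↓ X)` and compatible with all its morphisms,
the induced map `T : X → Y`, `T (φ u) = ψ (n, φ) u`, is well defined, linear and contractive. -/
theorem stmt2 {X Y : Type} [NormedAddCommGroup X] [NormedSpace ℝ X] [CompleteSpace X]
    [NormedAddCommGroup Y] [NormedSpace ℝ Y] [CompleteSpace Y]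
    (ψ : ∀ (n : ℕ) (φ : L1n n →L[ℝ] X), ‖φ‖ ≤ 1 → (L1n n →L[ℝ] Y))
    (hψnorm : ∀ n φ hφ, ‖ψ n φ hφ‖ ≤ 1)
    (hcompat : ∀ (n m : ℕ) (φ : L1n n →L[ℝ] X) (φ' : L1n m →L[ℝ] X)
      (hφ : ‖φ‖ ≤ 1) (hφ' : ‖φ'‖ ≤ 1) (α : L1n n →L[ℝ] L1n m), ‖α‖ ≤ 1 →
        φ'.comp α = φ → (ψ m φ' hφ').comp α = ψ n φ hφ) :
    (∀ (n m : ℕ) (φ : L1n n →L[ℝ] X) (φ' : L1n m →L[ℝ] X)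
      (hφ : ‖φ‖ ≤ 1) (hφ' : ‖φ'‖ ≤ 1) (u : L1n n) (u' : L1n m),
        φ u = φ' u' → ψ n φ hφ u = ψ m φ' hφ' u') ∧
    ∃ T : X →L[ℝ] Y, ‖T‖ ≤ 1 ∧
      ∀ (n : ℕ) (φ : L1n n →L[ℝ] X) (hφ : ‖φ‖ ≤ 1) (u : L1n n),
        T (φ u) = ψ n φ hφ u :=
  stmt2_general ψ hψnorm hcompat
end

section
/- The right Kan extension of the identity functor 1: Ban₁ → Ban₁ along the forgetful functor □: Ban₁ → QBan₁ is the Banach envelope functor co: QBan₁ → Ban₁. -/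
/-!
The universal arrows `η_Q : Q → co Q` make `co` left adjoint to `□`. For any adjunction `L ⊣ R`,
precomposition with `R` is left adjoint to precomposition with `L`, so the counit `R ⋙ L ⟶ 𝟭`
is a terminal right extension of the identity along `R`, i.e. `L` is its right Kan extension.
-/

open CategoryTheory Limits

/-- The category of (real) quasi-Banach spaces and contractive linear maps: a quasi-Banach space
is a vector space with a quasi-norm (with modulus of concavity `C`) which is complete for the
induced notion of Cauchy sequence. -/
structure QBan1 : Type 1 where
  carrier : Type
  [acg : AddCommGroup carrier]
  [mod : Module ℝ carrier]
  qnorm : carrier → ℝ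
  C : ℝ
  one_le_C : 1 ≤ C
  qnorm_zero_iff : ∀ x, qnorm x = 0 ↔ x = 0
  qnorm_smul : ∀ (a : ℝ) x, qnorm (a • x) = |a| * qnorm x
  qnorm_triangle : ∀ x y, qnorm (x + y) ≤ C * (qnorm x + qnorm y)
  complete : ∀ u : ℕ → carrier,
    (∀ ε > 0, ∃ N, ∀ m n, N ≤ m → N ≤ n → qnorm (u m - u n) < ε) →
    ∃ x, ∀ ε > 0, ∃ N, ∀ n, N ≤ n → qnorm (u n - x) < ε

attribute [instance] QBan1.acg QBan1.mod

instance : Category QBan1 where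
  Hom Q R := {f : Q.carrier →ₗ[ℝ] R.carrier // ∀ x, R.qnorm (f x) ≤ Q.qnorm x}
  id Q := ⟨LinearMap.id, fun x => le_refl _⟩
  comp f g := ⟨g.1.comp f.1, fun x => le_trans (g.2 _) (f.2 x)⟩
  id_comp f := Subtype.ext (LinearMap.ext fun _ => rfl)
  comp_id f := Subtype.ext (LinearMap.ext fun _ => rfl)
  assoc f g h := Subtype.ext (LinearMap.ext fun _ => rfl)

open CategoryTheory in
/-- The forgetful functor `□ : Ban₁ ⥤ QBan₁`. -/
noncomputable def box : Ban1 ⥤ QBan1 where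
  obj X :=
    { carrier := X.carrier
      qnorm := fun x => ‖x‖
      C := 1
      one_le_C := le_refl 1
      qnorm_zero_iff := fun x => norm_eq_zero
      qnorm_smul := fun a x => by show ‖a • x‖ = |a| * ‖x‖; rw [norm_smul, Real.norm_eq_abs]
      qnorm_triangle := fun x y => by show ‖x + y‖ ≤ 1 * (‖x‖ + ‖y‖); rw [one_mul]; exact norm_add_le x y
      complete := by
        intro u hu
        have hc : CauchySeq u := by
          rw [Metric.cauchySeq_iff]
          intro ε hε
          obtain ⟨N, hN⟩ := hu ε hε
          exact ⟨N, fun m hm n hn => by rw [dist_eq_norm]; exact hN m n hm hn⟩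
        obtain ⟨x, hx⟩ := cauchySeq_tendsto_of_complete hc
        refine ⟨x, fun ε hε => ?_⟩
        rw [Metric.tendsto_atTop] at hx
        obtain ⟨N, hN⟩ := hx ε hε
        exact ⟨N, fun n hn => by show ‖u n - x‖ < ε; rw [← dist_eq_norm]; exact hN n hn⟩ }
  map {X Y} f := ⟨f.1.toLinearMap, fun x =>
    le_trans (f.1.le_opNorm x) (mul_le_of_le_one_left (norm_nonneg x) f.2)⟩
  map_id X := Subtype.ext (LinearMap.ext fun _ => rfl)
  map_comp f g := Subtype.ext (LinearMap.ext fun _ => rfl)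

namespace CategoryTheory.Adjunction

variable {C D : Type*} [Category* C] [Category* D] {L : C ⥤ D} {R : D ⥤ C}

noncomputable def mkOfUnitBijective (η : 𝟭 C ⟶ L ⋙ R)
    (hη : ∀ X Y, Function.Bijective fun g : L.obj X ⟶ Y => η.app X ≫ R.map g) : L ⊣ R :=
  mkOfHomEquiv
    { homEquiv X Y := Equiv.ofBijective _ (hη X Y)
      homEquiv_naturality_left_symm {X' X Y} f g := by
        rw [Equiv.symm_apply_eq, Equiv.ofBijective_apply, Functor.map_comp]
        exact (congrArg (f ≫ ·) ((Equiv.ofBijective _ (hη X Y)).apply_symm_apply g).symm).trans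
          (η.naturality_assoc f _) }

theorem isRightKanExtension_counit (adj : L ⊣ R) : L.IsRightKanExtension adj.counit :=
  have : (L ⋙ 𝟭 D).IsRightKanExtension ((adj.whiskerLeft D).counit.app (𝟭 D)) :=
    ⟨⟨mkTerminalOfRightAdjoint _ (adj.whiskerLeft D) (𝟭 D)⟩⟩
  Functor.isRightKanExtension_of_iso L.rightUnitor ((adj.whiskerLeft D).counit.app (𝟭 D))
    adj.counit (by ext X; simp)

end CategoryTheory.Adjunction

open CategoryTheory in
/-- The right Kan extension of the identity functor `1 : Ban₁ ⥤ Ban₁` along the forgetful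
functor `□ : Ban₁ ⥤ QBan₁` is the Banach envelope functor `co` (characterized here by its
universal property via the canonical natural maps `η.app Q : Q → co Q`). -/
theorem stmt7 (co : QBan1 ⥤ Ban1) (η : 𝟭 QBan1 ⟶ co ⋙ box)
    (huniv : ∀ (Q : QBan1) (Y : Ban1) (f : Q ⟶ box.obj Y),
      ∃! g : co.obj Q ⟶ Y, η.app Q ≫ box.map g = f) :
    ∃ ε : box ⋙ co ⟶ 𝟭 Ban1, co.IsRightKanExtension ε :=
  let adj : co ⊣ box := Adjunction.mkOfUnitBijective η fun Q Y =>
    (Function.bijective_iff_existsUnique _).2 (huniv Q Y)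
  ⟨adj.counit, adj.isRightKanExtension_counit⟩
end

section
/- The left Kan extension of the identity functor 1: Ban₁ → Ban₁ along the forgetful functor □: Ban₁ → QBan₁ is also the Banach envelope functor co; in particular, for every quasi-Banach space Q, the colimit of the forgetful functor on the comma category (Ban₁ ↓ Q) (pairs (X, τ) with X Banach and τ: X → Q contractive) equals co(Q). -/
open CategoryTheory Limits

/-! Since `□` is fully faithful and `η` is a universal arrow, `co` is a pointwise left Kan
extension of the identity along `□` as soon as every cocone `s` over `(Ban₁ ↓ Q)` with vertex `Y`
comes from a unique contractive map `Q → □Y`. The value of a leg of `s` at a point depends only on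
the image of that point in `Q`: two points with the same image can be rescaled into the unit ball,
and then both factor through one arrow `□ℝ → Q`. So `s` defines a function `Q → Y`. It is additive
because any `q₁, q₂` lie in the image of a single arrow `□(ℝ × ℝ) → Q`,
`(a, b) ↦ (a q₁ + b q₂) / M` with `M` supplied by the quasi-triangle inequality, and contractive
because `q` is the image of a point of norm `qnorm q + ε` under the arrow
`t ↦ t q / (qnorm q + ε)`. -/

namespace QBan1

variable (Q : QBan1)

lemma qnorm_zero : Q.qnorm 0 = 0 := (Q.qnorm_zero_iff 0).2 rfl

lemma qnorm_neg (x : Q.carrier) : Q.qnorm (-x) = Q.qnorm x := by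
  simpa using Q.qnorm_smul (-1) x

lemma qnorm_nonneg (x : Q.carrier) : 0 ≤ Q.qnorm x := by
  have h := Q.qnorm_triangle x (-x)
  rw [add_neg_cancel, qnorm_zero, qnorm_neg] at h
  nlinarith [Q.one_le_C]

end QBan1

namespace Ban1

abbrev of (E : Type) [NormedAddCommGroup E] [NormedSpace ℝ E] [CompleteSpace E] : Ban1 := ⟨E⟩

lemma norm_hom_apply_le_s8 {X Y : Ban1} (f : X ⟶ Y) (x : X) : ‖f.1 x‖ ≤ ‖x‖ :=
  (f.1.le_opNorm x).trans (mul_le_of_le_one_left (norm_nonneg x) f.2)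

noncomputable def pointHom {X : Ban1} (x : X) (hx : ‖x‖ ≤ 1) : of ℝ ⟶ X :=
  ⟨ContinuousLinearMap.toSpanSingleton ℝ x,
    (ContinuousLinearMap.norm_toSpanSingleton x).trans_le hx⟩

end Ban1

noncomputable def boxFullyFaithful : box.FullyFaithful where
  preimage f := ⟨LinearMap.mkContinuous f.1 1 fun x => by rw [one_mul]; exact f.2 x,
    LinearMap.mkContinuous_norm_le _ zero_le_one _⟩
  map_preimage _ := rfl
  preimage_map _ := rfl

namespace QBan1

variable {Q : QBan1}

lemma box_hom_apply_smul {X : Ban1} (f : box.obj X ⟶ Q) (t : ℝ) (x : X) :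
    f.1 (t • x) = t • f.1 x :=
  f.1.map_smul t x

lemma box_hom_apply_add {X : Ban1} (f : box.obj X ⟶ Q) (x y : X) :
    f.1 (x + y) = f.1 x + f.1 y :=
  f.1.map_add x y

noncomputable def arrowOfBound {X : Ban1} (L : X →ₗ[ℝ] Q.carrier) {M : ℝ} (hM : 0 < M)
    (hL : ∀ x, Q.qnorm (L x) ≤ M * ‖x‖) : CostructuredArrow box Q :=
  CostructuredArrow.mk (Y := X) ⟨M⁻¹ • L, fun (x : X) => by
    change Q.qnorm (M⁻¹ • L x) ≤ ‖x‖
    rw [Q.qnorm_smul, abs_inv, abs_of_pos hM, inv_mul_le_iff₀ hM]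
    exact hL x⟩

lemma arrowOfBound_hom_apply_smul {X : Ban1} (L : X →ₗ[ℝ] Q.carrier) {M : ℝ} (hM : 0 < M)
    (hL : ∀ x, Q.qnorm (L x) ≤ M * ‖x‖) (x : X) :
    (arrowOfBound L hM hL).hom.1 (M • x) = L x := by
  change M⁻¹ • L (M • x) = L x
  rw [map_smul, smul_smul, inv_mul_cancel₀ hM.ne', one_smul]

lemma qnorm_smul_le (q : Q.carrier) {M : ℝ} (hM : Q.qnorm q ≤ M) (t : ℝ) :
    Q.qnorm (t • q) ≤ M * ‖t‖ := by
  rw [Q.qnorm_smul, Real.norm_eq_abs, mul_comm]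
  exact mul_le_mul_of_nonneg_right hM (abs_nonneg t)

lemma exists_hom_apply_eq (q : Q.carrier) {M : ℝ} (hq : Q.qnorm q < M) :
    ∃ (j : CostructuredArrow box Q) (x : j.left), ‖x‖ ≤ M ∧ j.hom.1 x = q := by
  have hM : 0 < M := (Q.qnorm_nonneg q).trans_lt hq
  refine ⟨arrowOfBound (X := Ban1.of ℝ) (LinearMap.toSpanSingleton ℝ Q.carrier q) hM
    (qnorm_smul_le q hq.le), M • (1 : ℝ), ?_, ?_⟩
  · change ‖M * 1‖ ≤ M
    rw [mul_one, Real.norm_of_nonneg hM.le]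
  · exact (arrowOfBound_hom_apply_smul _ hM _ _).trans (one_smul ℝ q)

lemma exists_hom_apply_eq_pair (q₁ q₂ : Q.carrier) :
    ∃ (j : CostructuredArrow box Q) (x₁ x₂ : j.left), j.hom.1 x₁ = q₁ ∧ j.hom.1 x₂ = q₂ := by
  set M := Q.C * (Q.qnorm q₁ + Q.qnorm q₂) + 1
  have hM : 0 < M := by
    have := Q.qnorm_nonneg q₁; have := Q.qnorm_nonneg q₂; have := Q.one_le_C
    positivity
  let L : Ban1.of (ℝ × ℝ) →ₗ[ℝ] Q.carrier :=
    (LinearMap.toSpanSingleton ℝ Q.carrier q₁).coprod (LinearMap.toSpanSingleton ℝ Q.carrier q₂)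
  have hL (v : ℝ × ℝ) : Q.qnorm (L v) ≤ M * ‖v‖ := by
    have h₁ := (qnorm_smul_le q₁ le_rfl v.1).trans
      (mul_le_mul_of_nonneg_left (norm_fst_le v) (Q.qnorm_nonneg q₁))
    have h₂ := (qnorm_smul_le q₂ le_rfl v.2).trans
      (mul_le_mul_of_nonneg_left (norm_snd_le v) (Q.qnorm_nonneg q₂))
    change Q.qnorm (v.1 • q₁ + v.2 • q₂) ≤ M * ‖v‖
    calc Q.qnorm (v.1 • q₁ + v.2 • q₂) ≤ Q.C * (Q.qnorm (v.1 • q₁) + Q.qnorm (v.2 • q₂)) :=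
          Q.qnorm_triangle _ _
      _ ≤ Q.C * ((Q.qnorm q₁ + Q.qnorm q₂) * ‖v‖) := by
          rw [add_mul]; gcongr; linarith [Q.one_le_C]
      _ ≤ M * ‖v‖ := by nlinarith [norm_nonneg v]
  refine ⟨arrowOfBound L hM hL, M • ((1, 0) : ℝ × ℝ), M • ((0, 1) : ℝ × ℝ),
    (arrowOfBound_hom_apply_smul L hM hL _).trans ?_,
    (arrowOfBound_hom_apply_smul L hM hL _).trans ?_⟩ <;> simp [L]

section Cocone

variable (s : Cocone (CostructuredArrow.proj box Q ⋙ 𝟭 Ban1))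

lemma cocone_ι_app_apply_eq_pointHom (k : CostructuredArrow box Q) (y : k.left) (hy : ‖y‖ ≤ 1) :
    (s.ι.app k).1 y =
      (s.ι.app (CostructuredArrow.mk (box.map (Ban1.pointHom y hy) ≫ k.hom))).1 (1 : ℝ) := by
  have h := congrArg (fun f => f.1 (1 : ℝ))
    (s.w (CostructuredArrow.homMk (f' := k) (Ban1.pointHom y hy) rfl
      (f := CostructuredArrow.mk (box.map (Ban1.pointHom y hy) ≫ k.hom))))
  change (s.ι.app k).1 ((1 : ℝ) • y) = _ at h
  rwa [one_smul] at h

lemma cocone_ι_app_apply_eq_of_norm_le_one {j j' : CostructuredArrow box Q} {x : j.left}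
    {x' : j'.left} (hx : ‖x‖ ≤ 1) (hx' : ‖x'‖ ≤ 1) (h : j.hom.1 x = j'.hom.1 x') :
    (s.ι.app j).1 x = (s.ι.app j').1 x' := by
  have hcomp : box.map (Ban1.pointHom x hx) ≫ j.hom = box.map (Ban1.pointHom x' hx') ≫ j'.hom :=
    Subtype.ext <| LinearMap.ext fun (t : ℝ) => by
      change j.hom.1 (t • x) = j'.hom.1 (t • x')
      exact (j.hom.1.map_smul t x).trans
        ((congrArg (t • ·) h).trans (j'.hom.1.map_smul t x').symm)
  rw [cocone_ι_app_apply_eq_pointHom s j x hx, cocone_ι_app_apply_eq_pointHom s j' x' hx', hcomp]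

lemma cocone_ι_app_apply_eq {j j' : CostructuredArrow box Q} {x : j.left} {x' : j'.left}
    (h : j.hom.1 x = j'.hom.1 x') : (s.ι.app j).1 x = (s.ι.app j').1 x' := by
  set r := max ‖x‖ ‖x'‖ + 1
  have hr : 0 < r := by positivity
  have hsmall {E : Type} [NormedAddCommGroup E] [NormedSpace ℝ E] (z : E)
      (hz : ‖z‖ ≤ max ‖x‖ ‖x'‖) : ‖r⁻¹ • z‖ ≤ 1 := by
    rw [norm_smul, norm_inv, Real.norm_of_nonneg hr.le, inv_mul_le_iff₀ hr, mul_one]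
    linarith
  have hscaled : (s.ι.app j).1 (r⁻¹ • x) = (s.ι.app j').1 (r⁻¹ • x') :=
    cocone_ι_app_apply_eq_of_norm_le_one s (hsmall x (le_max_left _ _))
      (hsmall x' (le_max_right _ _)) (by rw [box_hom_apply_smul, box_hom_apply_smul, h])
  have hunscale {E : Type} [NormedAddCommGroup E] [NormedSpace ℝ E] (z : E) :
      z = r • r⁻¹ • z := by
    rw [smul_smul, mul_inv_cancel₀ hr.ne', one_smul]
  calc (s.ι.app j).1 x = (s.ι.app j).1 (r • r⁻¹ • x) := by rw [← hunscale]
    _ = r • (s.ι.app j).1 (r⁻¹ • x) := (s.ι.app j).1.map_smul r _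
    _ = r • (s.ι.app j').1 (r⁻¹ • x') := by rw [hscaled]
    _ = (s.ι.app j').1 (r • r⁻¹ • x') := ((s.ι.app j').1.map_smul r _).symm
    _ = (s.ι.app j').1 x' := by rw [← hunscale]

-- Any preimage of `q` under any arrow gives the same value, by `cocone_ι_app_apply_eq`.
noncomputable def coconeDescFun (q : Q.carrier) : s.pt :=
  have h := exists_hom_apply_eq q (lt_add_one _)
  (s.ι.app h.choose).1 h.choose_spec.choose

lemma coconeDescFun_hom_apply (j : CostructuredArrow box Q) (x : j.left) :
    coconeDescFun s (j.hom.1 x) = (s.ι.app j).1 x :=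
  cocone_ι_app_apply_eq s
    (exists_hom_apply_eq (j.hom.1 x) (lt_add_one _)).choose_spec.choose_spec.2

lemma coconeDescFun_add (q₁ q₂ : Q.carrier) :
    coconeDescFun s (q₁ + q₂) = coconeDescFun s q₁ + coconeDescFun s q₂ := by
  obtain ⟨j, x₁, x₂, rfl, rfl⟩ := exists_hom_apply_eq_pair q₁ q₂
  rw [← box_hom_apply_add, coconeDescFun_hom_apply, coconeDescFun_hom_apply,
    coconeDescFun_hom_apply]
  exact (s.ι.app j).1.map_add x₁ x₂

lemma coconeDescFun_smul (a : ℝ) (q : Q.carrier) :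
    coconeDescFun s (a • q) = a • coconeDescFun s q := by
  obtain ⟨j, x, -, rfl⟩ := exists_hom_apply_eq q (lt_add_one _)
  rw [← box_hom_apply_smul, coconeDescFun_hom_apply, coconeDescFun_hom_apply]
  exact (s.ι.app j).1.map_smul a x

lemma norm_coconeDescFun_le (q : Q.carrier) : ‖coconeDescFun s q‖ ≤ Q.qnorm q := by
  refine le_of_forall_pos_le_add fun ε hε => ?_
  obtain ⟨j, x, hx, rfl⟩ := exists_hom_apply_eq q (lt_add_of_pos_right _ hε)
  rw [coconeDescFun_hom_apply]
  exact (Ban1.norm_hom_apply_le_s8 _ x).trans hx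

noncomputable def coconeDesc : Q ⟶ box.obj s.pt :=
  ⟨{ toFun := coconeDescFun s
     map_add' := coconeDescFun_add s
     map_smul' := coconeDescFun_smul s }, norm_coconeDescFun_le s⟩

lemma existsUnique_hom_comp_eq_box_map :
    ∃! g : Q ⟶ box.obj s.pt, ∀ j, j.hom ≫ g = box.map (s.ι.app j) := by
  refine ⟨coconeDesc s, fun j => Subtype.ext (LinearMap.ext (coconeDescFun_hom_apply s j)),
    fun g hg => Subtype.ext (LinearMap.ext fun q => ?_)⟩
  obtain ⟨j, x, -, rfl⟩ := exists_hom_apply_eq q (lt_add_one _)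
  exact (LinearMap.congr_fun (congrArg Subtype.val (hg j)) x).trans
    (coconeDescFun_hom_apply s j x).symm

end Cocone

end QBan1

section LeftKanExtension

variable {B A : Type*} [Category B] [Category A] {R : B ⥤ A} (hR : R.FullyFaithful)
  {L : A ⥤ B} (η : 𝟭 A ⟶ L ⋙ R)

noncomputable def unitPreimage : 𝟭 B ⟶ R ⋙ L :=
  (hR.whiskeringRight B).preimage (Functor.whiskerLeft R η)

lemma map_coconeAt_ι_app_comp (X : A) (j : CostructuredArrow R X) {Y : B} (g : L.obj X ⟶ Y) :
    R.map (((Functor.LeftExtension.mk L (unitPreimage hR η)).coconeAt X).ι.app j ≫ g) =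
      j.hom ≫ η.app X ≫ R.map g := by
  change R.map (((unitPreimage hR η).app j.left ≫ L.map j.hom) ≫ g) = _
  have hu : R.map ((unitPreimage hR η).app j.left) = η.app (R.obj j.left) := hR.map_preimage _
  rw [R.map_comp, R.map_comp, hu]
  exact congrArg (· ≫ R.map g) (η.naturality j.hom).symm |>.trans (Category.assoc _ _ _)

noncomputable def isPointwiseLeftKanExtensionAtOfUniversal
    (huniv : ∀ (X : A) (Y : B) (f : X ⟶ R.obj Y), ∃! g : L.obj X ⟶ Y, η.app X ≫ R.map g = f)
    (X : A) (hX : ∀ s : Cocone (CostructuredArrow.proj R X ⋙ 𝟭 B),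
      ∃! g : X ⟶ R.obj s.pt, ∀ j, j.hom ≫ g = R.map (s.ι.app j)) :
    (Functor.LeftExtension.mk L (unitPreimage hR η)).IsPointwiseLeftKanExtensionAt X where
  desc s := (huniv X s.pt (hX s).choose).choose
  fac s j := hR.map_injective <| by
    rw [map_coconeAt_ι_app_comp, (huniv X s.pt _).choose_spec.1, (hX s).choose_spec.1 j]
  uniq s m hm := (huniv X s.pt _).choose_spec.2 m <| (hX s).choose_spec.2 _ fun j =>
    (map_coconeAt_ι_app_comp hR η X j m).symm.trans (congrArg R.map (hm j))

end LeftKanExtension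

open CategoryTheory in
/-- The left Kan extension of the identity functor `1 : Ban₁ ⥤ Ban₁` along the forgetful
functor `□ : Ban₁ ⥤ QBan₁` is also the Banach envelope functor `co`; moreover it is a
*pointwise* left Kan extension: for every quasi-Banach space `Q`, the canonical cocone exhibits
`co Q` as the colimit of the forgetful functor on the comma category `(Ban₁ ↓ Q)` of pairs
`(X, τ : □X → Q)`. -/
theorem stmt8 (co : QBan1 ⥤ Ban1) (η : 𝟭 QBan1 ⟶ co ⋙ box)
    (huniv : ∀ (Q : QBan1) (Y : Ban1) (f : Q ⟶ box.obj Y),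
      ∃! g : co.obj Q ⟶ Y, η.app Q ≫ box.map g = f) :
    ∃ u : 𝟭 Ban1 ⟶ box ⋙ co, co.IsLeftKanExtension u ∧
      Nonempty ((Functor.LeftExtension.mk co u).IsPointwiseLeftKanExtension) := by
  have hpointwise :
      (Functor.LeftExtension.mk co (unitPreimage boxFullyFaithful η)).IsPointwiseLeftKanExtension :=
    fun Q => isPointwiseLeftKanExtensionAtOfUniversal boxFullyFaithful η huniv Q
      QBan1.existsUnique_hom_comp_eq_box_map
  exact ⟨_, hpointwise.isLeftKanExtension, ⟨hpointwise⟩⟩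
end
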